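/- Let M = (m_{s,t})_{s,t∈S} be a Coxeter matrix over a finite set S whose Coxeter group W_S is finite, whose Coxeter graph Γ_S is connected, and such that for all distinct s,t ∈ S the entry m_{s,t} is either 2 or odd. Let X be a nonempty proper subset of S such that the induced Coxeter graph Γ_X is disconnected. Then the standard parabolic subgroup A_X is not conjugacy stable in the Artin-Tits group A_S. -/

import Mathlib

namespace ArtinTits

variable {B : Type*}

/-- The alternating product `a b a b ⋯` with `m` factors, starting with `a`. -/
def altProd {G : Type*} [Monoid G] (a b : G) : ℕ → G
  | 0 => 1
  | n + 1 => a * altProd b a n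

/-- The braid relations defining the Artin–Tits group of a Coxeter matrix:
`Π(σ_s, σ_t; m_{s,t}) = Π(σ_t, σ_s; m_{s,t})` whenever `m_{s,t} ≠ ∞` (here `∞` is coded by `0`). -/
def artinRelationsSet (M : CoxeterMatrix B) : Set (FreeGroup B) :=
  {r | ∃ s t : B, M s t ≠ 0 ∧
    r = altProd (FreeGroup.of s) (FreeGroup.of t) (M s t) *
        (altProd (FreeGroup.of t) (FreeGroup.of s) (M s t))⁻¹}

/-- The Artin–Tits group of a Coxeter matrix. -/
abbrev ArtinGroup (M : CoxeterMatrix B) : Type _ := PresentedGroup (artinRelationsSet M)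

/-- The standard generator `σ_s` of the Artin–Tits group. -/
def σ (M : CoxeterMatrix B) (s : B) : ArtinGroup M := PresentedGroup.of s

/-- The standard parabolic subgroup `A_X` of the Artin–Tits group. -/
def AP (M : CoxeterMatrix B) (X : Set B) : Subgroup (ArtinGroup M) :=
  Subgroup.closure (σ M '' X)

/-- The standard parabolic subgroup `W_X` of the Coxeter group. -/
def WP (M : CoxeterMatrix B) (X : Set B) : Subgroup M.Group :=
  Subgroup.closure (M.simple '' X)

/-- A subgroup `H ≤ G` is conjugacy stable if any two elements of `H` which are conjugate
in `G` are already conjugate by an element of `H`. -/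
def IsConjugacyStable {G : Type*} [Group G] (H : Subgroup G) : Prop :=
  ∀ a b : G, a ∈ H → b ∈ H → (∃ g : G, g⁻¹ * a * g = b) → ∃ h ∈ H, h⁻¹ * a * h = b

/-- Property `⋆_W` for the pair `(W_X, W_S)`. -/
def StarW (M : CoxeterMatrix B) (X : Set B) : Prop :=
  ∀ Y₁ Y₂ : Set B, Y₁ ⊆ X → Y₂ ⊆ X → ∀ w : M.Group,
    (fun x => w⁻¹ * x * w) '' (M.simple '' Y₁) = M.simple '' Y₂ →
    ∃ v ∈ WP M X, ∀ y ∈ Y₁, v⁻¹ * M.simple y * v = w⁻¹ * M.simple y * w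

/-- Property `⋆_A` for the pair `(A_X, A_S)`. -/
def StarA (M : CoxeterMatrix B) (X : Set B) : Prop :=
  ∀ Y₁ Y₂ : Set B, Y₁ ⊆ X → Y₂ ⊆ X → ∀ g : ArtinGroup M,
    (fun x => g⁻¹ * x * g) '' (σ M '' Y₁) = σ M '' Y₂ →
    ∃ h ∈ AP M X, ∀ y ∈ Y₁, h⁻¹ * σ M y * h = g⁻¹ * σ M y * g

/-- Adjacency in the Coxeter graph: `s` and `t` are joined by an edge iff `m_{s,t} ≥ 3`
(where the value `0` codes `∞`, which also gives an edge). -/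
def Adj (M : CoxeterMatrix B) (s t : B) : Prop := s ≠ t ∧ M s t ≠ 2

/-- `s` and `t` are connected by a path of the Coxeter graph staying inside `X`. -/
def ReachIn (M : CoxeterMatrix B) (X : Set B) (s t : B) : Prop :=
  Relation.ReflTransGen (fun a b => a ∈ X ∧ b ∈ X ∧ Adj M a b) s t

/-- The Coxeter graph induced on `X` is connected. -/
def ConnectedIn (M : CoxeterMatrix B) (X : Set B) : Prop :=
  ∀ s ∈ X, ∀ t ∈ X, ReachIn M X s t

/-- The Coxeter matrix `M` restricted to `X` is of the type of the Coxeter matrix `M'`,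
i.e. there is a bijection transporting one to the other. -/
def IsOfType {B' : Type*} (M : CoxeterMatrix B) (X : Set B) (M' : CoxeterMatrix B') : Prop :=
  ∃ e : X ≃ B', ∀ a b : X, M a.val b.val = M' (e a) (e b)

/-- The Coxeter matrix of type `Bₙ` with the paper's labelling: vertices `0, …, n-1`
(representing `s_1, …, s_n`), `m_{s_1, s_2} = 4` and `m_{s_i, s_{i+1}} = 3` for `i ≥ 2`. -/
def Bmat (n : ℕ) : CoxeterMatrix (Fin n) where
  M := Matrix.of fun i j : Fin n ↦
    if i = j then 1
      else (if (i.val = 0 ∧ j.val = 1) ∨ (j.val = 0 ∧ i.val = 1) then 4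
        else (if (j : ℕ) + 1 = i ∨ (i : ℕ) + 1 = j then 3 else 2))
  isSymm := by unfold Matrix.IsSymm; aesop
  diagonal := by simp
  off_diagonal := by aesop

/-- The Coxeter matrix of type `Dₙ` with the paper's labelling: vertices `0, …, n-1`
(representing `s_1, …, s_n`), with edges `{s_1, s_3}`, `{s_2, s_3}` and `{s_i, s_{i+1}}`
for `i ≥ 3`, all labelled `3`. -/
def Dmat (n : ℕ) : CoxeterMatrix (Fin n) where
  M := Matrix.of fun i j : Fin n ↦
    if i = j then 1
      else (if (i.val = 0 ∧ j.val = 2) ∨ (j.val = 0 ∧ i.val = 2) then 3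
        else (if i.val = 0 ∨ j.val = 0 then 2
          else (if (j : ℕ) + 1 = i ∨ (i : ℕ) + 1 = j then 3 else 2)))
  isSymm := by unfold Matrix.IsSymm; aesop
  diagonal := by simp
  off_diagonal := by aesop

end ArtinTits

/-!
Odd edge labels make all `σ_s` conjugate in `A_S`: the braid relation of odd length `m`
says that `Π(σ_s, σ_t; m)` conjugates `σ_t` to `σ_s`, and `Γ_S` is connected.
On the other hand, let `s, t ∈ X` lie in different components of `Γ_X`, and `Y` be that of `s`.
In Tits' geometric representation `σ_x ↦ r_x`, `r_x v = v - 2 B(e_x, v) e_x` with the cosine form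
`B(e_x, e_y) = -cos (π / m_{x,y})`, every `r_x` with
`x ∈ X` preserves the vectors supported on `Y` (for `x ∉ Y`, `e_x` is `B`-orthogonal to them).
So if `h ∈ A_X` and `h⁻¹ σ_s h = σ_t`, then `ρ(h)⁻¹ r_s ρ(h) e_t - e_t` is a multiple of
`ρ(h)⁻¹ e_s`, supported on `Y`, whereas `r_t e_t - e_t = -2 e_t` is not.
-/

namespace Polynomial.Chebyshev

open Real

lemma S_sub_one_eval_two_mul_cos_pi_div_eq_zero {k : ℕ} (hk : 2 ≤ k) :
    (S ℝ (k - 1)).eval (2 * cos (π / k)) = 0 := by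
  have hk0 : (0 : ℝ) < k := by positivity
  have hsin : sin (π / k) ≠ 0 := by
    refine (sin_pos_of_pos_of_lt_pi (by positivity) ?_).ne'
    rw [div_lt_iff₀ hk0]
    exact lt_mul_of_one_lt_right pi_pos (by exact_mod_cast hk)
  have h := S_two_mul_real_cos (π / k) (k - 1)
  rw [show (((k - 1 : ℤ) : ℝ) + 1) * (π / k) = π by push_cast; field_simp; ring, sin_pi] at h
  exact (mul_eq_zero.mp h).resolve_right hsin

lemma S_eval_add_S_sub_one_eval_two_mul_cos_two_pi_div_eq_zero {k : ℕ} (hk : 1 ≤ k) :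
    (S ℝ k).eval (2 * cos (2 * π / (2 * k + 1))) +
      (S ℝ (k - 1)).eval (2 * cos (2 * π / (2 * k + 1))) = 0 := by
  set θ := 2 * π / (2 * k + 1) with hθ
  have hk0 : (0 : ℝ) < 2 * k + 1 := by positivity
  have hsin : sin θ ≠ 0 := by
    refine (sin_pos_of_pos_of_lt_pi (by positivity) ?_).ne'
    rw [hθ, div_lt_iff₀ hk0]
    nlinarith [pi_pos, (by exact_mod_cast hk : (1 : ℝ) ≤ k)]
  have h := S_two_mul_real_cos θ k
  have h' := S_two_mul_real_cos θ (k - 1)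
  have hsum : ((k : ℤ) + 1 : ℝ) * θ = 2 * π - (((k - 1 : ℤ) : ℝ) + 1) * θ := by
    rw [hθ]; push_cast; field_simp; ring
  rw [hsum, sin_two_pi_sub] at h
  apply (mul_eq_zero.mp (?_ : _ * sin θ = 0)).resolve_right hsin
  rw [add_mul, h, h', neg_add_cancel]

end Polynomial.Chebyshev

namespace Module

open Real Polynomial.Chebyshev

variable {V : Type*} [AddCommGroup V] [Module ℝ V] {x y : V} {f g : Dual ℝ V}

/-- `r₁ r₂` is a rotation by `2π / m`: both coefficients in the closed form
`reflection_mul_reflection_pow` vanish at `t = 2 cos (2π / m)`. -/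
lemma reflection_mul_reflection_pow_eq_one (hf : f x = 2) (hg : g y = 2) {m : ℕ} (hm : 3 ≤ m)
    (hfg : f y * g x = 4 * cos (π / m) ^ 2) : (reflection hf * reflection hg) ^ m = 1 := by
  have ht : 2 * cos (2 * π / m) = f y * g x - 2 := by
    rw [hfg, show 2 * π / m = 2 * (π / m) by ring, cos_two_mul]; ring
  have key := reflection_mul_reflection_pow hf hg m _ ht
  apply LinearEquiv.toLinearMap_injective
  obtain ⟨k, rfl | rfl⟩ := Nat.even_or_odd' m
  · push_cast at key
    rw [show (2 * (k : ℤ) - 2) / 2 = k - 1 by omega, show (2 * (k : ℤ) - 1) / 2 = k - 1 by omega,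
      show 2 * π / (2 * k) = π / k by field_simp,
      S_sub_one_eval_two_mul_cos_pi_div_eq_zero (by omega)] at key
    simpa using key
  · push_cast at key
    rw [show (2 * (k : ℤ) + 1 - 2) / 2 = k - 1 by omega, show (2 * (k : ℤ) + 1 - 1) / 2 = k by omega,
      show (2 * (k : ℤ) + 1 - 3) / 2 = k - 1 by omega, show (2 * (k : ℤ) + 1) / 2 = k by omega,
      S_eval_add_S_sub_one_eval_two_mul_cos_two_pi_div_eq_zero (by omega)] at key
    simpa using key

end Module

namespace ArtinTits

section AltProd

variable {G : Type*}

lemma map_altProd [Monoid G] {H : Type*} [Monoid H] (f : G →* H) (a b : G) (n : ℕ) :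
    f (altProd a b n) = altProd (f a) (f b) n := by
  induction n generalizing a b with
  | zero => simp [altProd]
  | succ n ih => simp only [altProd, map_mul, ih]

lemma altProd_add_one_of_odd [Monoid G] (a b : G) {n : ℕ} (hn : Odd n) :
    altProd a b (n + 1) = altProd a b n * b := by
  obtain ⟨k, rfl⟩ := hn
  induction k with
  | zero => simp [altProd]
  | succ k ih =>
    have hstep (m : ℕ) : altProd a b (m + 2) = a * (b * altProd a b m) := rfl
    rw [show 2 * (k + 1) + 1 + 1 = 2 * k + 1 + 1 + 2 by ring,
      show 2 * (k + 1) + 1 = 2 * k + 1 + 2 by ring, hstep (2 * k + 1 + 1), ih, hstep (2 * k + 1),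
      mul_assoc, mul_assoc]

lemma altProd_mul_inv_altProd [Group G] {a b : G} (ha : a⁻¹ = a) (hb : b⁻¹ = b) (n : ℕ) :
    altProd a b n * (altProd b a n)⁻¹ = (a * b) ^ n := by
  induction n with
  | zero => simp [altProd]
  | succ n ih =>
    calc altProd a b (n + 1) * (altProd b a (n + 1))⁻¹
        = a * (altProd a b n * (altProd b a n)⁻¹)⁻¹ * b := by simp [altProd, hb, mul_assoc]
      _ = (a * b) ^ (n + 1) := by
        rw [ih, ← inv_pow, mul_inv_rev, ha, hb, ← mul_pow_mul, pow_succ, mul_assoc]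

end AltProd

section ArtinGroup

variable {B : Type*} (M : CoxeterMatrix B)

lemma σ_braid {s t : B} (h0 : M s t ≠ 0) :
    altProd (σ M s) (σ M t) (M s t) = altProd (σ M t) (σ M s) (M s t) := by
  have hrel : PresentedGroup.mk (artinRelationsSet M)
      (altProd (.of s) (.of t) (M s t) * (altProd (.of t) (.of s) (M s t))⁻¹) = 1 :=
    (QuotientGroup.eq_one_iff _).mpr (Subgroup.subset_normalClosure ⟨s, t, h0, rfl⟩)
  rwa [map_mul, map_inv, mul_inv_eq_one, map_altProd, map_altProd] at hrel

def artinLift {G : Type*} [Group G] (f : B → G)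
    (hf : ∀ s t, M s t ≠ 0 → altProd (f s) (f t) (M s t) = altProd (f t) (f s) (M s t)) :
    ArtinGroup M →* G :=
  PresentedGroup.toGroup (rels := artinRelationsSet M) (f := f) <| by
    rintro _ ⟨s, t, h0, rfl⟩
    rw [map_mul, map_inv, mul_inv_eq_one, map_altProd, map_altProd, FreeGroup.lift_apply_of,
      FreeGroup.lift_apply_of, hf s t h0]

lemma artinLift_σ {G : Type*} [Group G] (f : B → G)
    (hf : ∀ s t, M s t ≠ 0 → altProd (f s) (f t) (M s t) = altProd (f t) (f s) (M s t)) (s : B) :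
    artinLift M f hf (σ M s) = f s :=
  PresentedGroup.toGroup.of _

lemma isConj_σ_of_odd {s t : B} (hodd : Odd (M s t)) : IsConj (σ M s) (σ M t) := by
  have hw : σ M s * altProd (σ M s) (σ M t) (M s t) =
      altProd (σ M s) (σ M t) (M s t) * σ M t := by
    rw [← altProd_add_one_of_odd _ _ hodd, altProd, σ_braid M hodd.pos.ne']
  refine isConj_iff.mpr ⟨(altProd (σ M s) (σ M t) (M s t))⁻¹, ?_⟩
  rw [inv_inv, mul_assoc, hw, ← mul_assoc, inv_mul_cancel, one_mul]

lemma isConj_σ_of_reachIn {X : Set B} (hodd : ∀ s t, Adj M s t → Odd (M s t)) {s t : B}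
    (h : ReachIn M X s t) : IsConj (σ M s) (σ M t) := by
  induction h with
  | refl => exact IsConj.refl _
  | tail _ hab ih => exact ih.trans (isConj_σ_of_odd M (hodd _ _ hab.2.2))

end ArtinGroup

section GeometricRep

open Real Finsupp

variable {B : Type*} (M : CoxeterMatrix B)

/-- For `M s t = 0` (coding `∞`) the junk value `π / 0 = 0` gives `-1`, the usual entry. -/
noncomputable def cosMatrix (s t : B) : ℝ := -cos (π / M s t)

lemma cosMatrix_self (s : B) : cosMatrix M s s = 1 := by simp [cosMatrix]

lemma cosMatrix_comm (s t : B) : cosMatrix M s t = cosMatrix M t s := by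
  rw [cosMatrix, cosMatrix, M.symmetric]

lemma cosMatrix_eq_zero {s t : B} (h : M s t = 2) : cosMatrix M s t = 0 := by
  simp [cosMatrix, h]

noncomputable def coroot (s : B) : Module.Dual ℝ (B →₀ ℝ) :=
  linearCombination ℝ fun t ↦ 2 * cosMatrix M s t

lemma coroot_single (s t : B) : coroot M s (single t 1) = 2 * cosMatrix M s t := by
  simp [coroot]

lemma coroot_single_self (s : B) : coroot M s (single s 1) = 2 := by
  rw [coroot_single, cosMatrix_self, mul_one]

noncomputable def simpleReflection (s : B) : (B →₀ ℝ) ≃ₗ[ℝ] (B →₀ ℝ) :=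
  Module.reflection (coroot_single_self M s)

lemma simpleReflection_apply (s : B) (v : B →₀ ℝ) :
    simpleReflection M s v = v - coroot M s v • single s 1 :=
  Module.reflection_apply _ _

lemma simpleReflection_inv (s : B) : (simpleReflection M s)⁻¹ = simpleReflection M s :=
  Module.reflection_inv _

lemma simpleReflection_mul_pow_eq_one {s t : B} (hst : s ≠ t) (h0 : M s t ≠ 0) :
    (simpleReflection M s * simpleReflection M t) ^ M s t = 1 := by
  have hm : 2 ≤ M s t := by have := M.off_diagonal s t hst; omega
  rcases hm.eq_or_lt with h2 | h3
  · have hst0 : cosMatrix M s t = 0 := cosMatrix_eq_zero M h2.symm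
    have hts0 : cosMatrix M t s = 0 := by rw [cosMatrix_comm, hst0]
    refine LinearEquiv.ext fun v ↦ ?_
    rw [← h2]
    simp only [sq, LinearEquiv.mul_apply, simpleReflection_apply, map_sub, map_smul, coroot_single,
      cosMatrix_self, hst0, hts0, LinearEquiv.coe_one, id]
    module
  · exact Module.reflection_mul_reflection_pow_eq_one _ _ h3 (by
      rw [coroot_single, coroot_single, cosMatrix_comm M t s, cosMatrix]; ring)

lemma simpleReflection_braid (s t : B) (h0 : M s t ≠ 0) :
    altProd (simpleReflection M s) (simpleReflection M t) (M s t) =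
      altProd (simpleReflection M t) (simpleReflection M s) (M s t) := by
  rcases eq_or_ne s t with rfl | hst
  · rfl
  · rw [← mul_inv_eq_one, altProd_mul_inv_altProd (simpleReflection_inv M s)
      (simpleReflection_inv M t), simpleReflection_mul_pow_eq_one M hst h0]

noncomputable def geometricRep : ArtinGroup M →* (B →₀ ℝ) ≃ₗ[ℝ] (B →₀ ℝ) :=
  artinLift M (simpleReflection M) (simpleReflection_braid M)

lemma geometricRep_σ (s : B) : geometricRep M (σ M s) = simpleReflection M s :=
  artinLift_σ M _ _ s

lemma simpleReflection_mem_supported {Y : Set B} {x : B} (hx : x ∈ Y ∨ ∀ y ∈ Y, M x y = 2)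
    {v : B →₀ ℝ} (hv : v ∈ supported ℝ ℝ Y) : simpleReflection M x v ∈ supported ℝ ℝ Y := by
  rcases hx with hx | hx
  · exact Submodule.mem_invtSubmodule_reflection_of_mem _ _ (single_mem_supported ℝ 1 hx) hv
  · have hker : supported ℝ ℝ Y ≤ LinearMap.ker (coroot M x) := by
      rw [supported_eq_span_single, Submodule.span_le]
      rintro _ ⟨y, hy, rfl⟩
      simp [coroot_single, cosMatrix_eq_zero M (hx y hy)]
    rwa [simpleReflection_apply, LinearMap.mem_ker.mp (hker hv), zero_smul, sub_zero]

lemma geometricRep_mem_supported {X Y : Set B} (hXY : ∀ x ∈ X, x ∈ Y ∨ ∀ y ∈ Y, M x y = 2)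
    {h : ArtinGroup M} (hh : h ∈ AP M X) {v : B →₀ ℝ} (hv : v ∈ supported ℝ ℝ Y) :
    geometricRep M h v ∈ supported ℝ ℝ Y := by
  induction hh using Subgroup.closure_induction'' generalizing v with
  | mem _ hx =>
    obtain ⟨x, hx, rfl⟩ := hx
    rw [geometricRep_σ]
    exact simpleReflection_mem_supported M (hXY x hx) hv
  | inv_mem _ hx =>
    obtain ⟨x, hx, rfl⟩ := hx
    rw [map_inv, geometricRep_σ, simpleReflection_inv]
    exact simpleReflection_mem_supported M (hXY x hx) hv
  | one => simpa using hv
  | mul _ _ _ _ ih₁ ih₂ =>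
    rw [map_mul, LinearEquiv.mul_apply]
    exact ih₁ (ih₂ hv)

lemma conj_simpleReflection_apply (g : (B →₀ ℝ) ≃ₗ[ℝ] (B →₀ ℝ)) (s : B) (v : B →₀ ℝ) :
    (g⁻¹ * simpleReflection M s * g) v = v - coroot M s (g v) • g⁻¹ (single s 1) := by
  simp only [LinearEquiv.mul_apply, simpleReflection_apply, map_sub, map_smul,
    LinearEquiv.coe_inv, LinearEquiv.symm_apply_apply]

lemma conj_σ_ne_of_mem_AP {X Y : Set B} (hXY : ∀ x ∈ X, x ∈ Y ∨ ∀ y ∈ Y, M x y = 2)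
    {s t : B} (hs : s ∈ Y) (ht : t ∉ Y) {h : ArtinGroup M} (hh : h ∈ AP M X) :
    h⁻¹ * σ M s * h ≠ σ M t := by
  intro hconj
  have hroot : geometricRep M h⁻¹ (single s 1) ∈ supported ℝ ℝ Y :=
    geometricRep_mem_supported M hXY (inv_mem hh) (single_mem_supported ℝ 1 hs)
  have hrep := congr($(congrArg (geometricRep M) hconj) (single t 1) t)
  rw [map_mul, map_mul, map_inv, geometricRep_σ, geometricRep_σ, conj_simpleReflection_apply,
    simpleReflection_apply, coroot_single_self, ← map_inv] at hrep
  rw [Finsupp.sub_apply, Finsupp.sub_apply, Finsupp.smul_apply, Finsupp.smul_apply,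
    (mem_supported' ℝ _).mp hroot t ht, single_eq_same] at hrep
  norm_num at hrep

end GeometricRep

def component {B : Type*} (M : CoxeterMatrix B) (X : Set B) (s : B) : Set B :=
  {y | y ∈ X ∧ ReachIn M X s y}

lemma mem_component_or_forall_eq_two {B : Type*} (M : CoxeterMatrix B) {X : Set B} {s x : B}
    (hx : x ∈ X) : x ∈ component M X s ∨ ∀ y ∈ component M X s, M x y = 2 := by
  refine or_iff_not_imp_left.mpr fun hxs y ⟨hy, hsy⟩ ↦ ?_
  by_contra hne
  exact hxs ⟨hx, hsy.tail ⟨hy, hx, fun h ↦ hxs (h ▸ ⟨hy, hsy⟩), by rwa [M.symmetric]⟩⟩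

theorem not_conjugacy_stable_of_disconnected_all_odd_general
    {B : Type*} (M : CoxeterMatrix B)
    (hconn : ConnectedIn M Set.univ)
    (hodd : ∀ s t : B, s ≠ t → M s t = 2 ∨ Odd (M s t))
    (X : Set B)
    (hXdisconn : ¬ ConnectedIn M X) :
    ¬ IsConjugacyStable (AP M X) := by
  intro hstab
  obtain ⟨s, hs, t, ht, hst⟩ : ∃ s ∈ X, ∃ t ∈ X, ¬ ReachIn M X s t := by
    simpa [ConnectedIn] using hXdisconn
  obtain ⟨g, hg⟩ := isConj_iff.mp <| isConj_σ_of_reachIn M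
    (fun a b hab ↦ (hodd a b hab.1).resolve_left hab.2) (hconn s trivial t trivial)
  obtain ⟨h, hh, hconj⟩ := hstab _ _ (Subgroup.subset_closure ⟨s, hs, rfl⟩)
    (Subgroup.subset_closure ⟨t, ht, rfl⟩) ⟨g⁻¹, by rwa [inv_inv]⟩
  exact conj_σ_ne_of_mem_AP M (fun x hx ↦ mem_component_or_forall_eq_two M hx) ⟨hs, .refl⟩
    (fun htY ↦ hst htY.2) hh hconj

/-- Section 4.1 of the paper: if every entry of the Coxeter matrix off the diagonal is `2` or
odd (i.e. every edge of the Coxeter graph has an odd label) and the induced Coxeter graph on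
`X` is disconnected, then `A_X` is not conjugacy stable in `A_S`. -/
theorem not_conjugacy_stable_of_disconnected_all_odd
    {B : Type*} [Finite B] (M : CoxeterMatrix B) [Finite M.Group]
    (hconn : ConnectedIn M Set.univ)
    (hodd : ∀ s t : B, s ≠ t → M s t = 2 ∨ Odd (M s t))
    (X : Set B) (hX : X.Nonempty) (hXproper : X ≠ Set.univ)
    (hXdisconn : ¬ ConnectedIn M X) :
    ¬ IsConjugacyStable (AP M X) :=
  not_conjugacy_stable_of_disconnected_all_odd_general M hconn hodd X hXdisconn

end ArtinTits
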